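/- For $a \in (0,\pi/2)$, the boundary values of $X(\xi,a) = \mathrm{Re}\,\ln\left(\sin z + \sqrt{\sin^2 z - \sin^2 a}\right) - \xi_2$ satisfy: $X(\xi_1,0,a) = \ln\sin a$ for $|\xi_1 - \pi j| < a$ ($j \in \mathbb{Z}$), and $\partial X/\partial\xi_2(\xi_1,0,a) = -1$ for $\xi_1$ with $|\xi_1 - \pi j| > a$ for all $j \in \mathbb{Z}$. -/

import Mathlib

open MeasureTheory Real Set

noncomputable def pd1 (f : ℝ × ℝ → ℝ) (p : ℝ × ℝ) : ℝ :=
  deriv (fun t => f (t, p.2)) p.1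

noncomputable def pd2 (f : ℝ × ℝ → ℝ) (p : ℝ × ℝ) : ℝ :=
  deriv (fun t => f (p.1, t)) p.2

/-- `X(ξ,a) = Re log(sin z + (sin² z − sin² a)^{1/2}) − ξ₂`, `z = ξ₁ + i ξ₂`. -/
noncomputable def Xfun (a : ℝ) (ξ : ℝ × ℝ) : ℝ :=
  (Complex.log (Complex.sin ((ξ.1 : ℂ) + (ξ.2 : ℂ) * Complex.I) +
      (Complex.sin ((ξ.1 : ℂ) + (ξ.2 : ℂ) * Complex.I) ^ 2 - Complex.sin (a : ℂ) ^ 2)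
        ^ ((1 : ℂ)/2))).re - ξ.2

/-- `Y(ξ,a) = Im log(sin z + (sin² z − sin² a)^{1/2}) − π/2 + ξ₁`. -/
noncomputable def Yfun (a : ℝ) (ξ : ℝ × ℝ) : ℝ :=
  (Complex.log (Complex.sin ((ξ.1 : ℂ) + (ξ.2 : ℂ) * Complex.I) +
      (Complex.sin ((ξ.1 : ℂ) + (ξ.2 : ℂ) * Complex.I) ^ 2 - Complex.sin (a : ℂ) ^ 2)
        ^ ((1 : ℂ)/2))).im - π/2 + ξ.1

/-- The half-period strip `Π = (−π/2, π/2) × (0, ∞)`. -/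
noncomputable def PiStrip : Set (ℝ × ℝ) := (Set.Ioo (-(π/2)) (π/2)) ×ˢ (Set.Ioi (0 : ℝ))

/-! Write `w(z) = sin z + R(z)` with `R(z) = (sin² z − sin² a)^{1/2}`, so that
`X = log |w(ξ₁ + i ξ₂)| − ξ₂`.

On `γ(a)` we have `sin² ξ₁ < sin² a`: `R²` tends to a negative real and `R` itself may jump
across the branch cut of the square root. Its size does not: the cross term
`Re (sin z · conj R)` has square `(|sin z|² |R²| + Re (sin² z · conj R²)) / 2 → 0`, hence
`|w|² → sin² ξ₁ + (sin² a − sin² ξ₁) = sin² a`.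

On `Γ(a)` we have `sin² ξ₁ > sin² a`, so `R²` stays in the slit plane and `w` is holomorphic.
Since `w · (sin z − R) = sin² a`, `w` never vanishes and `w'/w = cos z / R`, so
`∂X/∂ξ₂ = Re (i cos z / R) − 1`, which tends to `−1` because `cos ξ₁ / R(ξ₁)` is real. -/

open Filter Topology Complex ComplexConjugate

lemma sin_sq_sub_pi_mul_int (x : ℝ) (j : ℤ) : Real.sin (x - π * j) ^ 2 = Real.sin x ^ 2 := by
  rw [Real.sin_sq_eq_half_sub, Real.sin_sq_eq_half_sub,
    show 2 * (x - π * j) = 2 * x - j * (2 * π) by ring, Real.cos_sub_int_mul_two_pi]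

lemma sin_sq_lt_sin_sq {u v : ℝ} (huv : |u| < |v|) (hv : |v| ≤ π / 2) :
    Real.sin u ^ 2 < Real.sin v ^ 2 := by
  rw [Real.sin_sq_eq_half_sub, Real.sin_sq_eq_half_sub, ← Real.cos_abs (2 * u),
    ← Real.cos_abs (2 * v), abs_mul, abs_mul, abs_two]
  have := Real.cos_lt_cos_of_nonneg_of_le_pi (by positivity) (by linarith)
    (by linarith : 2 * |u| < 2 * |v|)
  linarith

lemma abs_sub_pi_mul_round_le (x : ℝ) : |x - π * round (x / π)| ≤ π / 2 := by
  have h := abs_sub_round (x / π)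
  rw [show x - π * round (x / π) = π * (x / π - round (x / π)) by field_simp, abs_mul,
    abs_of_pos Real.pi_pos]
  nlinarith [Real.pi_pos]

lemma Complex.re_mul_conj_sq (s S : ℂ) :
    (s * conj S).re ^ 2 = (normSq s * ‖S ^ 2‖ + (s ^ 2 * conj (S ^ 2)).re) / 2 := by
  rw [norm_pow, ← normSq_eq_norm_sq]
  simp only [pow_two, mul_re, mul_im, conj_re, conj_im, normSq_apply]
  ring

/-- `S` need not converge, e.g. when `S i ^ 2` approaches `c < 0` from both sides of the branch
cut of `(· ^ (1 / 2 : ℂ))`. -/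
theorem Complex.tendsto_normSq_add_of_tendsto_sq {α : Type*} {l : Filter α} {s S : α → ℂ}
    {x c : ℝ} (hs : Tendsto s l (𝓝 x)) (hS : Tendsto (fun i => S i ^ 2) l (𝓝 c)) (hc : c ≤ 0) :
    Tendsto (fun i => normSq (s i + S i)) l (𝓝 (x ^ 2 - c)) := by
  have hs2 : Tendsto (fun i => normSq (s i)) l (𝓝 (x ^ 2)) := by
    simpa [Function.comp_def, sq] using (continuous_normSq.tendsto _).comp hs
  have hS2 : Tendsto (fun i => ‖S i ^ 2‖) l (𝓝 (-c)) := by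
    simpa [abs_of_nonpos hc] using hS.norm
  have hcross_sq : Tendsto (fun i => (s i * conj (S i)).re ^ 2) l (𝓝 0) := by
    simp only [re_mul_conj_sq]
    have hconj : Tendsto (fun i => (s i ^ 2 * conj (S i ^ 2)).re) l (𝓝 (x ^ 2 * c)) := by
      have := (continuous_re.tendsto _).comp
        ((hs.pow 2).mul ((continuous_conj.tendsto _).comp hS))
      simpa only [Function.comp_def, conj_ofReal, ← ofReal_pow, ← ofReal_mul, ofReal_re]
        using this
    simpa using ((hs2.mul hS2).add hconj).div_const 2
  have hcross : Tendsto (fun i => (s i * conj (S i)).re) l (𝓝 0) := by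
    refine (tendsto_zero_iff_abs_tendsto_zero _).2 ?_
    simpa only [Function.comp_def, Real.sqrt_sq_eq_abs, Real.sqrt_zero] using hcross_sq.sqrt
  simp only [normSq_add, normSq_eq_norm_sq (S _), ← norm_pow]
  simpa [sub_eq_add_neg] using (hs2.add hS2).add (hcross.const_mul 2)

lemma HasDerivAt.log_norm {f : ℝ → ℂ} {f' : ℂ} {t : ℝ} (hf : HasDerivAt f f' t)
    (h : f t ≠ 0) : HasDerivAt (fun s => Real.log ‖f s‖) (f' / f t).re t := by
  have hsq : HasDerivAt (fun s => Real.log (‖f s‖ ^ 2) / 2)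
      (2 * Inner.inner ℝ (f t) f' / ‖f t‖ ^ 2 / 2) t :=
    (hf.norm_sq.log (by positivity)).div_const 2
  convert hsq using 1
  · ext s
    rw [Real.log_pow]
    push_cast
    ring
  · rw [Complex.inner, div_re, ← normSq_eq_norm_sq]
    field_simp
    simp only [mul_re, conj_re, conj_im]
    ring

lemma HasDerivAt.comp_add_mul_I {φ : ℂ → ℂ} {φ' : ℂ} {x t : ℝ}
    (h : HasDerivAt φ φ' (x + t * I)) : HasDerivAt (fun s : ℝ => φ (x + s * I)) (φ' * I) t := by
  have hline : HasDerivAt (fun s : ℝ => (x : ℂ) + s * I) I t := by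
    simpa using ((hasDerivAt_id (t : ℂ)).comp_ofReal.mul_const I).const_add (x : ℂ)
  exact h.comp t hline

noncomputable def radical (a : ℝ) (z : ℂ) : ℂ := (sin z ^ 2 - sin (a : ℂ) ^ 2) ^ ((1 : ℂ) / 2)

noncomputable def Wfun (a : ℝ) (z : ℂ) : ℂ := sin z + radical a z

lemma Xfun_eq_log_norm_Wfun (a ξ₁ t : ℝ) :
    Xfun a (ξ₁, t) = Real.log ‖Wfun a (ξ₁ + t * I)‖ - t := by
  rw [← log_re]
  rfl

lemma radical_sq (a : ℝ) (z : ℂ) : radical a z ^ 2 = sin z ^ 2 - sin (a : ℂ) ^ 2 := by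
  rw [radical, one_div]
  exact cpow_ofNat_inv_pow _ 2

lemma radical_ofReal {a x : ℝ} (h : Real.sin a ^ 2 ≤ Real.sin x ^ 2) :
    radical a x = (√(Real.sin x ^ 2 - Real.sin a ^ 2) : ℝ) := by
  rw [radical, ← ofReal_sin, ← ofReal_sin, ← ofReal_pow, ← ofReal_pow, ← ofReal_sub,
    Real.sqrt_eq_rpow, ofReal_cpow (by linarith)]
  norm_num

lemma Wfun_mul_sin_sub_radical (a : ℝ) (z : ℂ) :
    Wfun a z * (sin z - radical a z) = sin (a : ℂ) ^ 2 := by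
  rw [Wfun, ← sq_sub_sq, radical_sq]
  ring

lemma Wfun_ne_zero {a : ℝ} (ha : Real.sin a ≠ 0) (z : ℂ) : Wfun a z ≠ 0 := by
  refine left_ne_zero_of_mul (b := sin z - radical a z) ?_
  rw [Wfun_mul_sin_sub_radical, ← ofReal_sin]
  exact pow_ne_zero 2 (ofReal_ne_zero.2 ha)

lemma hasDerivAt_Wfun {a : ℝ} {z : ℂ} (hz : sin z ^ 2 - sin (a : ℂ) ^ 2 ∈ slitPlane) :
    HasDerivAt (Wfun a) (cos z / radical a z * Wfun a z) z := by
  have hR : radical a z ≠ 0 := fun h0 => slitPlane_ne_zero hz (by rw [← radical_sq, h0]; ring)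
  have hF : HasDerivAt (fun w : ℂ => sin w ^ 2 - sin (a : ℂ) ^ 2) (2 * sin z * cos z) z := by
    simpa [mul_assoc] using ((hasDerivAt_sin z).pow 2).sub_const (sin (a : ℂ) ^ 2)
  have hpow : (sin z ^ 2 - sin (a : ℂ) ^ 2) ^ ((1 : ℂ) / 2 - 1) = (radical a z)⁻¹ := by
    rw [show (1 : ℂ) / 2 - 1 = -(1 / 2) by norm_num, cpow_neg, radical]
  refine ((hasDerivAt_sin z).add (hF.cpow_const (c := (1 : ℂ) / 2) hz)).congr_deriv ?_
  rw [hpow, Wfun]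
  field_simp
  ring

lemma hasDerivAt_Xfun {a ξ₁ t : ℝ} (ha : Real.sin a ≠ 0)
    (hz : sin (ξ₁ + t * I) ^ 2 - sin (a : ℂ) ^ 2 ∈ slitPlane) :
    HasDerivAt (fun s => Xfun a (ξ₁, s))
      ((I * cos (ξ₁ + t * I) / radical a (ξ₁ + t * I)).re - 1) t := by
  have hW := (hasDerivAt_Wfun hz).comp_add_mul_I.log_norm (Wfun_ne_zero ha _)
  rw [funext (Xfun_eq_log_norm_Wfun a ξ₁)]
  refine (hW.sub (hasDerivAt_id t)).congr_deriv ?_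
  have := Wfun_ne_zero ha (ξ₁ + t * I)
  congr 2
  field_simp

lemma tendsto_Xfun_nhds_zero {a ξ₁ : ℝ} (ha : 0 < Real.sin a)
    (h : Real.sin ξ₁ ^ 2 ≤ Real.sin a ^ 2) :
    Tendsto (fun t => Xfun a (ξ₁, t)) (𝓝 0) (𝓝 (Real.log (Real.sin a))) := by
  have hsin : Tendsto (fun t : ℝ => sin (ξ₁ + t * I)) (𝓝 0) (𝓝 (Real.sin ξ₁ : ℂ)) := by
    simpa using (by fun_prop : Continuous fun t : ℝ => sin (ξ₁ + t * I)).tendsto 0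
  have hR : Tendsto (fun t : ℝ => radical a (ξ₁ + t * I) ^ 2) (𝓝 0)
      (𝓝 ((Real.sin ξ₁ ^ 2 - Real.sin a ^ 2 : ℝ) : ℂ)) := by
    simp only [radical_sq]
    convert (hsin.pow 2).sub_const (sin (a : ℂ) ^ 2) using 2
    push_cast
    ring
  have hnormSq := tendsto_normSq_add_of_tendsto_sq hsin hR (by linarith)
  have hnorm : Tendsto (fun t : ℝ => ‖Wfun a (ξ₁ + t * I)‖) (𝓝 0) (𝓝 (Real.sin a)) := by
    simpa [Wfun, norm_def, Real.sqrt_sq ha.le] using hnormSq.sqrt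
  simpa [Xfun_eq_log_norm_Wfun] using (hnorm.log ha.ne').sub (tendsto_id (x := 𝓝 (0 : ℝ)))

lemma tendsto_pd2_Xfun_nhds_zero {a ξ₁ : ℝ} (ha : Real.sin a ≠ 0)
    (h : Real.sin a ^ 2 < Real.sin ξ₁ ^ 2) :
    Tendsto (fun t => pd2 (Xfun a) (ξ₁, t)) (𝓝 0) (𝓝 (-1)) := by
  set F : ℝ → ℂ := fun t => sin (ξ₁ + t * I) ^ 2 - sin (a : ℂ) ^ 2 with hF_def
  have hF : Continuous F := by fun_prop
  have hF0 : F 0 ∈ slitPlane := by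
    refine mem_slitPlane_iff.2 (Or.inl ?_)
    simpa [hF_def, ← ofReal_sin, ← ofReal_pow] using h
  have hR : ContinuousAt (fun t : ℝ => radical a (ξ₁ + t * I)) 0 :=
    (continuousAt_cpow_const hF0).comp hF.continuousAt
  have hR0 : radical a ξ₁ ≠ 0 := by
    rw [radical_ofReal h.le, ofReal_ne_zero, Real.sqrt_ne_zero']
    linarith
  have hG : ContinuousAt
      (fun t : ℝ => (I * cos (ξ₁ + t * I) / radical a (ξ₁ + t * I)).re - 1) 0 := by
    refine (continuous_re.continuousAt.comp ?_).sub continuousAt_const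
    exact (continuousAt_const.mul (by fun_prop)).div hR (by simpa using hR0)
  have hG0 : (I * cos (ξ₁ + (0 : ℝ) * I) / radical a (ξ₁ + (0 : ℝ) * I)).re - 1 = -1 := by
    simp [radical_ofReal h.le, ← ofReal_cos, div_re]
  have hderiv : ∀ᶠ t in 𝓝 0, pd2 (Xfun a) (ξ₁, t) =
      (I * cos (ξ₁ + t * I) / radical a (ξ₁ + t * I)).re - 1 := by
    filter_upwards [hF.continuousAt.eventually_mem (isOpen_slitPlane.mem_nhds hF0)] with t ht
    exact (hasDerivAt_Xfun ha ht).deriv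
  rw [← hG0]
  exact hG.tendsto.congr' (hderiv.mono fun t ht => ht.symm)

/-- Boundary values of `X(·,a)`: Dirichlet value `ln sin a` on `γ(a)` and
Neumann value `−1` on `Γ(a)`, understood as limits `ξ₂ → 0⁺`. -/
theorem Xfun_boundary_values (a : ℝ) (ha : a ∈ Set.Ioo 0 (π/2)) :
    (∀ ξ₁ : ℝ, (∃ j : ℤ, |ξ₁ - π * j| < a) →
      Filter.Tendsto (fun ξ₂ => Xfun a (ξ₁, ξ₂)) (nhdsWithin 0 (Set.Ioi 0))
        (nhds (Real.log (Real.sin a)))) ∧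
    (∀ ξ₁ : ℝ, (∀ j : ℤ, a < |ξ₁ - π * j|) →
      Filter.Tendsto (fun ξ₂ => pd2 (Xfun a) (ξ₁, ξ₂)) (nhdsWithin 0 (Set.Ioi 0))
        (nhds (-1))) := by
  obtain ⟨ha0, ha1⟩ := ha
  have hsin : 0 < Real.sin a := Real.sin_pos_of_pos_of_lt_pi ha0 (by linarith [Real.pi_pos])
  have habs : |a| = a := abs_of_pos ha0
  refine ⟨fun ξ₁ ⟨j, hj⟩ => ?_, fun ξ₁ hj => ?_⟩
  · have hlt := sin_sq_lt_sin_sq (habs.symm ▸ hj) (habs.symm ▸ ha1.le)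
    rw [sin_sq_sub_pi_mul_int] at hlt
    exact (tendsto_Xfun_nhds_zero hsin hlt.le).mono_left nhdsWithin_le_nhds
  · have hlt := sin_sq_lt_sin_sq (habs.symm ▸ hj _) (abs_sub_pi_mul_round_le ξ₁)
    rw [sin_sq_sub_pi_mul_int] at hlt
    exact (tendsto_pd2_Xfun_nhds_zero hsin.ne' hlt).mono_left nhdsWithin_le_nhds
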